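/- There is a bijection φ between the set B(r,n) of colored biwords and the set of triplets (γ, λ, μ) where γ ∈ G(r,n), λ ∈ P_n is γ̃^{-1}-compatible, and μ ∈ P_n is γ-compatible. Here B(r,n) consists of pairs (g, f) ∈ P_n × N_0^{(r,n)} such that whenever g_i = g_{i+1} (for 0 ≤ i ≤ n−1, with g_0 := 0, f_0 := 0 of color 0): if f_i ≠ f_{i+1} then f_i^{c_i} < f_{i+1}^{c_{i+1}} in the colored order, and if f_i = f_{i+1} then c_i = 0 implies c_{i+1} = 0. The bijection is given by γ := π(f), λ := g, and μ := (f_{σ(1)},...,f_{σ(n)}) where γ = (c_1,...,c_n;σ). -/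

import Mathlib

/-!
If `γ = (c; σ) = π(f)`, the positions of `γ` are ordered by the key "value of `f`, then colored
index": `p < q` iff `f_{σ(p)} < f_{σ(q)}`, or the values agree and `γ(p) < γ(q)`. Hence `f` is
recovered from `γ` and `μ = f ∘ σ` (values `μ ∘ σ⁻¹`, colors `c ∘ σ⁻¹`), which gives injectivity
and the inverse map. Comparing, by this key, two adjacent letters of `γ̃⁻¹` (values `σ⁻¹(i) + 1`,
colors those of `f`) shows that the biword condition at `i` holds exactly when `i` is not a descent
of `γ̃⁻¹`; for weakly increasing `g` this is `γ̃⁻¹`-compatibility. Finally, `μ` is automatically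
strict at the descents of `γ` after position `0`, and strictness at `0` amounts to `f` having no
colored zero.
-/

open Finset

namespace Paper

/-- An element of `G(r,n) = ℤ_r ≀ S_n`: a pair (underlying permutation, color vector). -/
abbrev CPerm (r n : ℕ) := Equiv.Perm (Fin n) × (Fin n → Fin r)

/-- A colored sequence: values and colors. -/
abbrev CSeq (r n : ℕ) := (Fin n → ℕ) × (Fin n → Fin r)

variable {r n : ℕ}

/-- The order on colored integers (value, color):
`n^{r-1} < ⋯ < n^1 < ⋯ < 1^{r-1} < ⋯ < 1^1 < 0 < 1 < ⋯ < n`.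
`clt a b` means `a < b`. -/
def clt (a b : ℕ × ℕ) : Prop :=
  (0 < a.2 ∧ b.2 = 0) ∨
  (0 < a.2 ∧ 0 < b.2 ∧ (b.1 < a.1 ∨ (a.1 = b.1 ∧ b.2 < a.2))) ∨
  (a.2 = 0 ∧ b.2 = 0 ∧ a.1 < b.1)

instance (a b : ℕ × ℕ) : Decidable (clt a b) := by unfold clt; exact inferInstance

/-- The colored entry of `γ` at (0-based) position `i`: value `σ(i)` (1-based) with its color. -/
def entry (γ : CPerm r n) (i : Fin n) : ℕ × ℕ := ((γ.1 i : ℕ) + 1, (γ.2 i : ℕ))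

/-- Window value `γ(i)` for `i ∈ [0,n]` (1-based positions), with `γ(0) := 0`. -/
def wval (γ : CPerm r n) (i : ℕ) : ℕ × ℕ :=
  if h : 1 ≤ i ∧ i ≤ n then ((γ.1 ⟨i - 1, by omega⟩ : ℕ) + 1, (γ.2 ⟨i - 1, by omega⟩ : ℕ))
  else (0, 0)

/-- Descent set `Des_G(γ) = {i ∈ [0,n-1] : γ(i) > γ(i+1)}`, with `γ(0) := 0`. -/
def DesG (γ : CPerm r n) : Finset ℕ :=
  (range n).filter fun i => clt (wval γ (i + 1)) (wval γ i)

def desG (γ : CPerm r n) : ℕ := (DesG γ).card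

def majG (γ : CPerm r n) : ℕ := ∑ i ∈ DesG γ, i

def colG (γ : CPerm r n) : ℕ := ∑ i, (γ.2 i : ℕ)

/-- Number of inversions: pairs `i < j` with `γ(i) > γ(j)` in the colored order. -/
def invG (γ : CPerm r n) : ℕ :=
  ((univ : Finset (Fin n × Fin n)).filter fun p =>
    p.1 < p.2 ∧ clt (entry γ p.2) (entry γ p.1)).card

/-- Length `ℓ_G(γ) = inv(γ) + Σ_{c_i ≠ 0} (σ(i) + c_i - 1)` (σ(i) 1-based). -/
def lenG (γ : CPerm r n) : ℕ :=
  invG γ + ∑ i ∈ univ.filter (fun i => (γ.2 i : ℕ) ≠ 0), ((γ.1 i : ℕ) + (γ.2 i : ℕ))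

/-- Membership in `N_0^{(r,n)}`: a zero value has color 0. -/
def ValidSeq (f : CSeq r n) : Prop := ∀ i, f.1 i = 0 → (f.2 i : ℕ) = 0

/-- The defining property of `π(f) = γ = (c;σ)`:
`f_{σ(1)} ≤ … ≤ f_{σ(n)}`, `c_i(γ) = c_{σ(i)}(f)`, and `γ(i) < γ(i+1)` whenever
`f_{σ(i)} = f_{σ(i+1)}`. -/
def isPi (f : CSeq r n) (γ : CPerm r n) : Prop :=
  (∀ i j : Fin n, i ≤ j → f.1 (γ.1 i) ≤ f.1 (γ.1 j)) ∧
  (∀ i, γ.2 i = f.2 (γ.1 i)) ∧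
  (∀ i j : Fin n, (i : ℕ) + 1 = (j : ℕ) → f.1 (γ.1 i) = f.1 (γ.1 j) →
    clt (entry γ i) (entry γ j))

def maxf (f : CSeq r n) : ℕ := univ.sup f.1

def sumf (f : CSeq r n) : ℕ := ∑ i, f.1 i

/-- The partition `λ(f)` (relative to `γ = π(f)`), with values in `ℤ`:
`λ_i = f_{σ(i)} - #{j ∈ Des_G(γ) : j ≤ i-1}` (1-based `i`). -/
def lamZ (f : CSeq r n) (γ : CPerm r n) (i : Fin n) : ℤ :=
  (f.1 (γ.1 i) : ℤ) - ((DesG γ).filter (· ≤ (i : ℕ))).card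

/-- 1-based reading of an `n`-tuple, with value `0` at index `0` (and outside `[1,n]`). -/
def mval (μ : Fin n → ℕ) (i : ℕ) : ℕ :=
  if h : 1 ≤ i ∧ i ≤ n then μ ⟨i - 1, by omega⟩ else 0

/-- `μ` is `γ`-compatible: `μ_i < μ_{i+1}` for all `i ∈ Des_G(γ)` (with `μ_0 := 0`). -/
def compat (μ : Fin n → ℕ) (γ : CPerm r n) : Prop :=
  ∀ i ∈ DesG γ, mval μ i < mval μ (i + 1)

/-- The skew inverse `γ̃⁻¹ = (c_{σ⁻¹(1)},…,c_{σ⁻¹(n)}; σ⁻¹)`. -/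
def skewInv (γ : CPerm r n) : CPerm r n := (γ.1⁻¹, fun i => γ.2 (γ.1⁻¹ i))

/-- The group inverse: `γ⁻¹ = (c'; σ⁻¹)` with `c'_i = (r - c_{σ⁻¹(i)}) mod r`. -/
def cinv (γ : CPerm r n) : CPerm r n :=
  (γ.1⁻¹, fun i =>
    ⟨(r - (γ.2 (γ.1⁻¹ i) : ℕ)) % r,
      Nat.mod_lt _ (Nat.lt_of_le_of_lt (Nat.zero_le _) (γ.2 (γ.1⁻¹ i)).isLt)⟩)

/-- The group law of `G(r,n)`: `(c;σ)·(d;τ) = ((d_i + c_{τ(i)}) mod r; στ)`. -/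
def cmul (x y : CPerm r n) : CPerm r n :=
  (x.1 * y.1, fun i =>
    ⟨((y.2 i : ℕ) + (x.2 (y.1 i) : ℕ)) % r,
      Nat.mod_lt _ (Nat.lt_of_le_of_lt (Nat.zero_le _) (y.2 i).isLt)⟩)

/-- The color-forgetting projection `φ : G(r,n) → B_n = G(2,n)`. -/
def phi (γ : CPerm r n) : CPerm 2 n := (γ.1, fun i => ⟨min (γ.2 i : ℕ) 1, by omega⟩)

/-- `[m]_p = 1 + p + ⋯ + p^{m-1}`. -/
def qint {R : Type*} [CommRing R] (p : R) (m : ℕ) : R := ∑ j ∈ range m, p ^ j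

/-- `[m]_p! = [1]_p [2]_p ⋯ [m]_p`. -/
def qfact {R : Type*} [CommRing R] (p : R) (m : ℕ) : R := ∏ j ∈ range m, qint p (j + 1)

/-- `[m̂]_{b,p}! = (1+bp)(1+bp²)⋯(1+bp^m)·[m]_p!`. -/
def hqfact {R : Type*} [CommRing R] (b p : R) (m : ℕ) : R :=
  (∏ i ∈ range m, (1 + b * p ^ (i + 1))) * qfact p m

/-- A formal power series in two variables `X 0, X 1` from its coefficients. -/
def seriesOf2 (F : ℕ → ℕ → ℚ) : MvPowerSeries (Fin 2) ℚ := fun d => F (d 0) (d 1)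

/-- A formal power series in three variables from its coefficients. -/
def seriesOf3 (F : ℕ → ℕ → ℕ → ℚ) : MvPowerSeries (Fin 3) ℚ := fun d => F (d 0) (d 1) (d 2)


/-- 1-based value of the colored sequence `f` at `i ∈ [0,n]`, with `f_0 := 0`. -/
def fval (f : CSeq r n) (i : ℕ) : ℕ := mval f.1 i

/-- 1-based color of the colored sequence `f` at `i ∈ [0,n]`, with color of `f_0` being `0`. -/
def fcol (f : CSeq r n) (i : ℕ) : ℕ :=
  if h : 1 ≤ i ∧ i ≤ n then (f.2 ⟨i - 1, by omega⟩ : ℕ) else 0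

/-- The biword condition defining `B(r,n)` (Definition 6.1): whenever `g_i = g_{i+1}`
(with `g_0 := 0`, `f_0 := 0^0`): if `f_i ≠ f_{i+1}` then `f_i^{c_i} < f_{i+1}^{c_{i+1}}`,
and if `f_i = f_{i+1}` then `c_i = 0 ⟹ c_{i+1} = 0`. -/
def biword (g : Fin n → ℕ) (f : CSeq r n) : Prop :=
  ∀ i ∈ range n, mval g i = mval g (i + 1) →
    (fval f i ≠ fval f (i + 1) →
      clt (fval f i, fcol f i) (fval f (i + 1), fcol f (i + 1))) ∧
    (fval f i = fval f (i + 1) → fcol f i = 0 → fcol f (i + 1) = 0)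

lemma clt_irrefl (a : ℕ × ℕ) : ¬ clt a a := by
  simp only [clt]; omega

lemma clt_asymm {a b : ℕ × ℕ} (h : clt a b) : ¬ clt b a := by
  simp only [clt] at *; omega

lemma clt_trans {a b c : ℕ × ℕ} (hab : clt a b) (hbc : clt b c) : clt a c := by
  simp only [clt] at *; omega

lemma clt_trichotomous (a b : ℕ × ℕ) : clt a b ∨ a = b ∨ clt b a := by
  obtain ⟨a₁, a₂⟩ := a; obtain ⟨b₁, b₂⟩ := b
  simp only [clt, Prod.mk.injEq]; omega

lemma perm_apply_inv_self {α : Type*} (σ : Equiv.Perm α) (x : α) : σ (σ⁻¹ x) = x :=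
  σ.apply_symm_apply x

lemma entry_injective (γ : CPerm r n) : Function.Injective (entry γ) := by
  intro a b hab
  simp only [entry, Prod.mk.injEq, Nat.add_right_cancel_iff] at hab
  exact γ.1.injective (Fin.ext hab.1)

lemma wval_zero (γ : CPerm r n) : wval γ 0 = (0, 0) := by simp [wval]

lemma wval_succ (γ : CPerm r n) {i : ℕ} (h : i < n) : wval γ (i + 1) = entry γ ⟨i, h⟩ :=
  dif_pos ⟨Nat.le_add_left _ _, h⟩

lemma mval_zero (μ : Fin n → ℕ) : mval μ 0 = 0 := by simp [mval]

lemma mval_succ (μ : Fin n → ℕ) {i : ℕ} (h : i < n) : mval μ (i + 1) = μ ⟨i, h⟩ :=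
  dif_pos ⟨Nat.le_add_left _ _, h⟩

lemma mval_le_mval_succ {g : Fin n → ℕ} (hg : Monotone g) {i : ℕ} (hi : i < n) :
    mval g i ≤ mval g (i + 1) := by
  cases i with
  | zero => rw [mval_zero]; exact Nat.zero_le _
  | succ i => rw [mval_succ _ hi, mval_succ _ (by omega)]; exact hg (Fin.mk_le_mk.2 (by omega))

lemma fcol_zero (f : CSeq r n) : fcol f 0 = 0 := by simp [fcol]

lemma fcol_succ (f : CSeq r n) {i : ℕ} (h : i < n) : fcol f (i + 1) = f.2 ⟨i, h⟩ :=
  dif_pos ⟨Nat.le_add_left _ _, h⟩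

lemma mem_DesG {γ : CPerm r n} {i : ℕ} :
    i ∈ DesG γ ↔ i < n ∧ clt (wval γ (i + 1)) (wval γ i) := by
  simp [DesG]

lemma lt_of_mem_DesG {γ : CPerm r n} {i : ℕ} (hi : i ∈ DesG γ) : i < n :=
  (mem_DesG.1 hi).1

lemma zero_mem_DesG_iff (γ : CPerm r n) (h : 0 < n) : 0 ∈ DesG γ ↔ 0 < (γ.2 ⟨0, h⟩ : ℕ) := by
  rw [mem_DesG, wval_zero, wval_succ γ h]
  simp [clt, entry, h]

lemma succ_mem_DesG_iff (γ : CPerm r n) {i : ℕ} (h : i + 1 < n) :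
    i + 1 ∈ DesG γ ↔ clt (entry γ ⟨i + 1, h⟩) (entry γ ⟨i, by omega⟩) := by
  rw [mem_DesG, wval_succ γ h, wval_succ γ (by omega)]
  exact and_iff_right h

def BiwordStep (f : CSeq r n) (i : ℕ) : Prop :=
  (fval f i ≠ fval f (i + 1) → clt (fval f i, fcol f i) (fval f (i + 1), fcol f (i + 1))) ∧
  (fval f i = fval f (i + 1) → fcol f i = 0 → fcol f (i + 1) = 0)

lemma biword_iff_forall_biwordStep (g : Fin n → ℕ) (f : CSeq r n) :
    biword g f ↔ ∀ i < n, mval g i = mval g (i + 1) → BiwordStep f i := by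
  simp only [biword, BiwordStep, mem_range]

def unsort (γ : CPerm r n) (μ : Fin n → ℕ) : CSeq r n :=
  (fun j => μ (γ.1⁻¹ j), fun j => γ.2 (γ.1⁻¹ j))

@[simp]
lemma unsort_fst_apply (γ : CPerm r n) (μ : Fin n → ℕ) (i : Fin n) :
    (unsort γ μ).1 (γ.1 i) = μ i := by
  simp [unsort]

namespace isPi

variable {f : CSeq r n} {γ : CPerm r n}

lemma monotone (h : isPi f γ) : Monotone fun i => f.1 (γ.1 i) := h.1

lemma color_inv_apply (h : isPi f γ) (j : Fin n) : γ.2 (γ.1⁻¹ j) = f.2 j := by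
  rw [h.2.1, perm_apply_inv_self]

lemma entry_inv_apply (h : isPi f γ) (j : Fin n) :
    entry γ (γ.1⁻¹ j) = ((j : ℕ) + 1, (f.2 j : ℕ)) := by
  simp only [entry, perm_apply_inv_self, h.color_inv_apply]

lemma entry_skewInv (h : isPi f γ) (j : Fin n) :
    entry (skewInv γ) j = ((γ.1⁻¹ j : ℕ) + 1, (f.2 j : ℕ)) := by
  simp only [entry, skewInv, h.color_inv_apply]

lemma eq_unsort (h : isPi f γ) : f = unsort γ fun i => f.1 (γ.1 i) :=
  Prod.ext (funext fun j => by simp [unsort])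
    (funext fun j => (h.color_inv_apply j).symm)

lemma clt_entry_of_lt (h : isPi f γ) {a b : Fin n} (hab : a < b)
    (hv : f.1 (γ.1 a) = f.1 (γ.1 b)) : clt (entry γ a) (entry γ b) := by
  obtain ⟨b, hb⟩ := b
  induction b, (show (a : ℕ) + 1 ≤ b from hab) using Nat.le_induction with
  | base => exact h.2.2 a _ rfl hv
  | succ b hab ih =>
    have hmid : f.1 (γ.1 a) = f.1 (γ.1 ⟨b, by omega⟩) :=
      le_antisymm (h.1 _ _ (Fin.mk_le_mk.2 (by omega)))
        (hv ▸ h.1 _ _ (Fin.mk_le_mk.2 (by omega)))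
    exact clt_trans (ih (by omega) (Fin.mk_lt_mk.2 (by omega)) hmid)
      (h.2.2 _ _ rfl (hmid ▸ hv))

lemma lt_iff (h : isPi f γ) (a b : Fin n) :
    a < b ↔ f.1 (γ.1 a) < f.1 (γ.1 b) ∨
      f.1 (γ.1 a) = f.1 (γ.1 b) ∧ clt (entry γ a) (entry γ b) := by
  constructor
  · intro hab
    rcases (h.1 a b hab.le).lt_or_eq with hlt | heq
    · exact Or.inl hlt
    · exact Or.inr ⟨heq, h.clt_entry_of_lt hab heq⟩
  · rintro (hlt | ⟨heq, hc⟩)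
    · exact lt_of_not_ge fun hba => (h.1 b a hba).not_gt hlt
    · rcases lt_trichotomy a b with hab | rfl | hba
      · exact hab
      · exact absurd hc (clt_irrefl _)
      · exact absurd (h.clt_entry_of_lt hba heq.symm) (clt_asymm hc)

lemma biwordStep_iff (h : isPi f γ) {i : ℕ} (hi : i < n) :
    BiwordStep f i ↔ i ∉ DesG (skewInv γ) := by
  cases i with
  | zero =>
    rw [zero_mem_DesG_iff _ hi]
    simp only [BiwordStep, fval, mval_zero, fcol_zero, mval_succ _ hi, fcol_succ _ hi, skewInv,
      h.color_inv_apply, clt, true_and, forall_const]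
    omega
  | succ j =>
    rw [succ_mem_DesG_iff _ hi, h.entry_skewInv, h.entry_skewInv]
    have hj : j < n := by omega
    have hpos := h.lt_iff (γ.1⁻¹ ⟨j, hj⟩) (γ.1⁻¹ ⟨j + 1, hi⟩)
    have hpos' := h.lt_iff (γ.1⁻¹ ⟨j + 1, hi⟩) (γ.1⁻¹ ⟨j, hj⟩)
    have hne : (γ.1⁻¹ ⟨j, hj⟩ : ℕ) ≠ γ.1⁻¹ ⟨j + 1, hi⟩ := by
      simp [Fin.val_eq_val, Fin.ext_iff]
    simp only [perm_apply_inv_self, h.entry_inv_apply, Fin.lt_def] at hpos hpos'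
    simp only [BiwordStep, fval, mval_succ _ hj, mval_succ _ hi, fcol_succ _ hj,
      fcol_succ _ hi, clt] at hpos hpos' ⊢
    omega

theorem biword_iff_compat (h : isPi f γ) {g : Fin n → ℕ} (hg : Monotone g) :
    biword g f ↔ compat g (skewInv γ) := by
  rw [biword_iff_forall_biwordStep]
  constructor
  · intro hb i hi
    have hin := lt_of_mem_DesG hi
    exact (mval_le_mval_succ hg hin).lt_of_ne fun heq =>
      (h.biwordStep_iff hin).1 (hb i hin heq) hi
  · exact fun hc i hi heq => (h.biwordStep_iff hi).2 fun hd => (hc i hd).ne heq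

theorem compat_iff_validSeq (h : isPi f γ) : compat (fun i => f.1 (γ.1 i)) γ ↔ ValidSeq f := by
  constructor
  · intro hc
    have hcol : ∀ p : Fin n, f.1 (γ.1 p) = 0 → (γ.2 p : ℕ) = 0 := by
      rintro ⟨p, hp⟩ h0
      induction p with
      | zero =>
        by_contra hne
        have := hc 0 ((zero_mem_DesG_iff γ hp).2 (by omega))
        rw [mval_zero, mval_succ _ hp] at this
        omega
      | succ p ih =>
        have hle := h.1 ⟨p, by omega⟩ ⟨p + 1, hp⟩ (Fin.mk_le_mk.2 (by omega))
        have hlt := h.2.2 ⟨p, by omega⟩ ⟨p + 1, hp⟩ rfl (by omega)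
        have := ih (by omega) (by omega)
        simp only [clt, entry] at hlt
        omega
    intro j hj
    rw [← h.color_inv_apply]
    exact hcol _ (by rwa [perm_apply_inv_self])
  · intro hf i hi
    cases i with
    | zero =>
      have hn := lt_of_mem_DesG hi
      rw [zero_mem_DesG_iff γ hn, h.2.1] at hi
      rw [mval_zero, mval_succ _ hn]
      exact Nat.pos_of_ne_zero fun h0 => by have := hf _ h0; omega
    | succ j =>
      have hn := lt_of_mem_DesG hi
      rw [succ_mem_DesG_iff γ hn] at hi
      rw [mval_succ _ (by omega), mval_succ _ hn]
      rcases (h.lt_iff ⟨j, by omega⟩ ⟨j + 1, hn⟩).1 (Fin.mk_lt_mk.2 (by omega)) with hlt | ⟨-, hc⟩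
      · exact hlt
      · exact absurd hi (clt_asymm hc)

end isPi

lemma isPi_unsort {γ : CPerm r n} {μ : Fin n → ℕ} (hμ : Monotone μ) (hc : compat μ γ) :
    isPi (unsort γ μ) γ := by
  refine ⟨fun i j hij => by simpa using hμ hij, fun i => by simp [unsort], ?_⟩
  rintro ⟨i, hi⟩ ⟨j, hj⟩ hij hv
  obtain rfl : i + 1 = j := hij
  simp only [unsort_fst_apply] at hv
  have hasc : ¬ clt (entry γ ⟨i + 1, hj⟩) (entry γ ⟨i, hi⟩) := fun hd => by
    have := hc (i + 1) ((succ_mem_DesG_iff γ hj).2 hd)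
    rw [mval_succ _ hi, mval_succ _ hj] at this
    omega
  rcases clt_trichotomous (entry γ ⟨i, hi⟩) (entry γ ⟨i + 1, hj⟩) with hlt | heq | hgt
  · exact hlt
  · exact absurd (entry_injective γ heq) (by simp)
  · exact absurd hgt hasc

theorem stmt12_general (r n : ℕ)
    (π : CSeq r n → CPerm r n)
    (hπ : ∀ f, ValidSeq f → isPi f (π f) ∧ ∀ γ, isPi f γ → γ = π f) :
    Set.BijOn
      (fun gf : (Fin n → ℕ) × CSeq r n =>
        (π gf.2, gf.1, fun i => gf.2.1 ((π gf.2).1 i)))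
      {gf : (Fin n → ℕ) × CSeq r n | Monotone gf.1 ∧ ValidSeq gf.2 ∧ biword gf.1 gf.2}
      {t : CPerm r n × (Fin n → ℕ) × (Fin n → ℕ) |
        Monotone t.2.1 ∧ compat t.2.1 (skewInv t.1) ∧ Monotone t.2.2 ∧ compat t.2.2 t.1} := by
  refine ⟨?_, ?_, ?_⟩
  · rintro ⟨g, f⟩ ⟨hg, hf, hgf⟩
    have h := (hπ f hf).1
    exact ⟨hg, (h.biword_iff_compat hg).1 hgf, h.monotone, h.compat_iff_validSeq.2 hf⟩
  · rintro ⟨g, f⟩ ⟨-, hf, -⟩ ⟨g', f'⟩ ⟨-, hf', -⟩ heq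
    simp only [Prod.mk.injEq] at heq
    obtain ⟨hγ, rfl, hμ⟩ := heq
    exact congrArg _ <| (hπ f hf).1.eq_unsort.trans <|
      (congrArg₂ unsort hγ hμ).trans (hπ f' hf').1.eq_unsort.symm
  · rintro ⟨γ, l, μ⟩ ⟨hl, hlc, hμ, hμc⟩
    have h := isPi_unsort hμ hμc
    have hf : ValidSeq (unsort γ μ) := h.compat_iff_validSeq.1 (by simpa using hμc)
    refine ⟨(l, unsort γ μ), ⟨hl, hf, (h.biword_iff_compat hl).2 hlc⟩, ?_⟩
    simp only [← (hπ _ hf).2 γ h, unsort_fst_apply]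

/-- Theorem 6.3: the map `(g,f) ↦ (π(f), g, (f_{σ(1)},…,f_{σ(n)}))` is a
bijection between the set `B(r,n)` of colored biwords and the triplets `(γ, λ, μ)` with
`γ ∈ G(r,n)`, `λ ∈ P_n` a `γ̃⁻¹`-compatible partition and `μ ∈ P_n` a `γ`-compatible
partition. -/
theorem stmt12 (r n : ℕ) (hr : 0 < r)
    (π : CSeq r n → CPerm r n)
    (hπ : ∀ f, ValidSeq f → isPi f (π f) ∧ ∀ γ, isPi f γ → γ = π f) :
    Set.BijOn
      (fun gf : (Fin n → ℕ) × CSeq r n =>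
        (π gf.2, gf.1, fun i => gf.2.1 ((π gf.2).1 i)))
      {gf : (Fin n → ℕ) × CSeq r n | Monotone gf.1 ∧ ValidSeq gf.2 ∧ biword gf.1 gf.2}
      {t : CPerm r n × (Fin n → ℕ) × (Fin n → ℕ) |
        Monotone t.2.1 ∧ compat t.2.1 (skewInv t.1) ∧ Monotone t.2.2 ∧ compat t.2.2 t.1} :=
  stmt12_general r n π hπ

end Paper
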